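/- Let G be a finite connected 2-γ'MB-critical graph with a cut-vertex x such that every edge of G incident with x is a bridge of G. Then G is isomorphic to F_{m₁,1,m₂} for some integers 2 ≤ m₁ ≤ m₂. -/

import Mathlib

/-- `D` is a dominating set of `G`: every vertex not in `D` has a neighbor in `D`. -/
def Dominating {V : Type*} (G : SimpleGraph V) (D : Set V) : Prop :=
  ∀ v, v ∉ D → ∃ d ∈ D, G.Adj d v

/-- Dominator wins the S-game on `G` within one move. -/
def WinsWithin1 {V : Type*} (G : SimpleGraph V) : Prop :=
  ∀ s₁ : V, ∃ d₁, d₁ ≠ s₁ ∧ Dominating G {d₁}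

/-- Dominator wins the S-game on `G` within two moves. -/
def WinsWithin2 {V : Type*} (G : SimpleGraph V) : Prop :=
  ∀ s₁ : V, ∃ d₁, d₁ ≠ s₁ ∧
    (Dominating G {d₁} ∨
      ∀ s₂, s₂ ∉ ({s₁, d₁} : Set V) →
        ∃ d₂, d₂ ∉ ({s₁, d₁, s₂} : Set V) ∧ Dominating G {d₁, d₂})

/-- `γ'MB(G) = 2`: Dominator wins the S-game within two moves but not within one. -/
def MBPrimeEqTwo {V : Type*} (G : SimpleGraph V) : Prop :=
  WinsWithin2 G ∧ ¬ WinsWithin1 G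

/-- `G` is `2`-`γ'MB`-critical: `γ'MB(G) = 2` and for every edge `e`, Dominator does not
win the S-game on `G - e` within two moves. -/
def Critical2 {V : Type*} (G : SimpleGraph V) : Prop :=
  MBPrimeEqTwo G ∧ ∀ u v : V, G.Adj u v → ¬ WinsWithin2 (G.deleteEdges {s(u, v)})

/-- The graph `H_m`, the join of `K₂` with the complement of `K_{m-2}`: the first two
vertices are adjacent to everything, the remaining vertices form an independent set.
(`H₀` is the null graph, `H₂ = K₂`.) -/
def HGraph (m : ℕ) : SimpleGraph (Fin m) :=
  SimpleGraph.fromRel (fun u _ => u.val < 2)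

/-- Vertex type of `F_{m₁,t,m₂}`: a copy of `H_{m₁}`, a copy of `H_{m₂}`, the independent
set `B` of `t` vertices, and the two vertices `v₁ = inr (inr 0)` and `v₂ = inr (inr 1)`. -/
abbrev FVert (m₁ t m₂ : ℕ) : Type := (Fin m₁ ⊕ Fin m₂) ⊕ (Fin t ⊕ Fin 2)

/-- The graph `F_{m₁,t,m₂}`: disjoint copies of `H_{m₁}` and `H_{m₂}`, an independent set
`B` of `t` vertices, and nonadjacent vertices `v₁, v₂`, where `v₁` is joined to `H_{m₁}`,
`v₂` is joined to `H_{m₂}`, and both `v₁` and `v₂` are joined to all of `B`. -/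
def FGraph (m₁ t m₂ : ℕ) : SimpleGraph (FVert m₁ t m₂) :=
  SimpleGraph.fromRel (fun u v =>
    match u, v with
    | .inl (.inl a), .inl (.inl _) => a.val < 2   -- inside H_{m₁}
    | .inl (.inr a), .inl (.inr _) => a.val < 2   -- inside H_{m₂}
    | .inr (.inr i), .inl (.inl _) => i = 0       -- v₁ to H_{m₁}
    | .inr (.inr i), .inl (.inr _) => i = 1       -- v₂ to H_{m₂}
    | .inr (.inr _), .inr (.inl _) => True        -- v₁, v₂ to B
    | _, _ => False)

/-!
Because every edge at `x` is a bridge, each component of `G - x` contains exactly one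
neighbour of `x`. When Staller opens on `x`, Dominator's answer yields a dominating pair avoiding
`x`, so there are exactly two components `C₁ ∋ v₁` and `C₂ ∋ v₂`, and `v₁`, `v₂` are the only
neighbours of `x`. If `C₂ = {v₂}`, then `G - x v₁` would still be won by Dominator, so both sides
have more than one vertex. Then every dominating pair consists of a vertex universal in `C₁` and
one universal in `C₂`, and one of the two is `v₁` or `v₂`. When Staller opens on `v₁`, this
makes `v₂` universal in `C₂` and forces two more universal vertices `p₁`, `q₁` in `C₁`.
Deleting an edge inside `C₁ \ {v₁, p₁, q₁}` would not hurt Dominator, so that set is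
independent. Hence `C₁` is `v₁` joined to `H_{m₁}`, and likewise for `C₂`: `G ≅ F_{m₁,1,m₂}`.
-/

open SimpleGraph

section

variable {V : Type*} {G : SimpleGraph V}

theorem dominating_singleton_iff {d : V} : Dominating G {d} ↔ ∀ v, v ≠ d → G.Adj d v := by
  simp [Dominating]

theorem dominating_pair_iff {a b : V} :
    Dominating G {a, b} ↔ ∀ v, v ≠ a → v ≠ b → G.Adj a v ∨ G.Adj b v := by
  simp [Dominating]

theorem WinsWithin2.exists_response (hW : WinsWithin2 G) (s₁ : V)
    (h : ∀ d, d ≠ s₁ → ¬ Dominating G {d}) :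
    ∃ d₁, d₁ ≠ s₁ ∧ ∀ s₂, s₂ ≠ s₁ → s₂ ≠ d₁ →
      ∃ d₂, d₂ ≠ s₁ ∧ d₂ ≠ d₁ ∧ d₂ ≠ s₂ ∧ Dominating G {d₁, d₂} := by
  obtain ⟨d₁, hd₁, hD | hS⟩ := hW s₁
  · exact absurd hD (h d₁ hd₁)
  refine ⟨d₁, hd₁, fun s₂ h₁ h₂ => ?_⟩
  obtain ⟨d₂, hd₂, hD⟩ := hS s₂ (by simp [h₁, h₂])
  simp only [Set.mem_insert_iff, Set.mem_singleton_iff, not_or] at hd₂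
  exact ⟨d₂, hd₂.1, hd₂.2.1, hd₂.2.2, hD⟩

theorem WinsWithin2.exists_dominating_pair_ne (hW : WinsWithin2 G) {x a b : V} (hab : a ≠ b)
    (ha : a ≠ x) (hb : b ≠ x) : ∃ d d', d ≠ x ∧ d' ≠ x ∧ Dominating G {d, d'} := by
  obtain ⟨d, hd, hD | hS⟩ := hW x
  · exact ⟨d, d, hd, hd, by rwa [Set.pair_eq_singleton]⟩
  obtain ⟨s, hs, hsd⟩ := (Set.nontrivial_pair hab).exists_ne d
  have hsx : s ≠ x := by rcases hs with rfl | rfl <;> assumption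
  obtain ⟨d', hd', hD⟩ := hS s (by simp [hsx, hsd])
  exact ⟨d, d', hd, fun h => hd' (by simp [h]), hD⟩

/-- Staller's second move can take away only one of the two partners. -/
theorem winsWithin2_of_nontrivial_partners
    (h : ∀ s₁, ∃ d₁, d₁ ≠ s₁ ∧ {d₂ | d₂ ≠ s₁ ∧ d₂ ≠ d₁ ∧ Dominating G {d₁, d₂}}.Nontrivial) :
    WinsWithin2 G := by
  intro s₁
  obtain ⟨d₁, hd₁, hP⟩ := h s₁
  refine ⟨d₁, hd₁, Or.inr fun s₂ _ => ?_⟩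
  obtain ⟨d₂, ⟨h₁, h₂, hD⟩, h₃⟩ := hP.exists_ne s₂
  exact ⟨d₂, by simp [h₁, h₂, h₃], hD⟩

theorem winsWithin2_of_dominating_pairs {A B : Set V} (hAB : Disjoint A B) (hA : A.Nontrivial)
    (hB : B.Nontrivial) (hD : ∀ a ∈ A, ∀ b ∈ B, Dominating G {a, b}) : WinsWithin2 G := by
  refine winsWithin2_of_nontrivial_partners fun s₁ => ?_
  by_cases hs₁ : s₁ ∈ B
  · obtain ⟨d₁, hd₁B, hd₁⟩ := hB.exists_ne s₁
    refine ⟨d₁, hd₁, hA.mono fun a ha => ⟨hAB.ne_of_mem ha hs₁, hAB.ne_of_mem ha hd₁B, ?_⟩⟩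
    rw [Set.pair_comm]
    exact hD a ha d₁ hd₁B
  · obtain ⟨d₁, hd₁A, hd₁⟩ := hA.exists_ne s₁
    exact ⟨d₁, hd₁, hB.mono fun b hb =>
      ⟨fun h => hs₁ (h ▸ hb), (hAB.ne_of_mem hd₁A hb).symm, hD d₁ hd₁A b hb⟩⟩

theorem nontrivial_triple_diff_singleton {a b c : V} (hab : a ≠ b) (hac : a ≠ c) (hbc : b ≠ c)
    (s : V) : (({a, b, c} : Set V) \ {s}).Nontrivial := by
  rcases eq_or_ne s a with rfl | hsa
  · exact ⟨b, by simp [hab.symm], c, by simp [hac.symm], hbc⟩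
  rcases eq_or_ne s b with rfl | hsb
  · exact ⟨a, by simp [hab], c, by simp [hbc.symm], hac⟩
  · exact ⟨a, by simp [hsa.symm], b, by simp [hsb.symm], hab⟩

section DeleteIncidenceSet

variable {x : V}

theorem eq_of_reachable_deleteIncidenceSet {y : V} (h : (G.deleteIncidenceSet x).Reachable x y) :
    y = x := by
  obtain ⟨p⟩ := h
  cases p with
  | nil => rfl
  | cons h _ => exact ((deleteIncidenceSet_adj.1 h).2.1 rfl).elim

theorem exists_adj_reachable_deleteIncidenceSet {y : V} (p : G.Walk y x) (hy : y ≠ x) :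
    ∃ u, G.Adj x u ∧ (G.deleteIncidenceSet x).Reachable y u := by
  induction p with
  | nil => exact absurd rfl hy
  | @cons y z w h p ih =>
    by_cases hz : z = w
    · subst hz
      exact ⟨y, h.symm, .rfl⟩
    · obtain ⟨u, hu, hzu⟩ := ih hz
      exact ⟨u, hu, (deleteIncidenceSet_adj.2 ⟨h, hy, hz⟩).reachable.trans hzu⟩

theorem not_reachable_deleteIncidenceSet_of_isBridge {u u' : V} (hb : G.IsBridge s(x, u))
    (hu' : G.Adj x u') (hne : u' ≠ u) : ¬ (G.deleteIncidenceSet x).Reachable u' u := by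
  intro h
  have hle : G.deleteIncidenceSet x ≤ G.deleteEdges {s(x, u)} := fun a b hab => by
    rw [deleteIncidenceSet_adj] at hab
    simp [hab.1, hab.2.1, hab.2.2]
  have hxu' : (G.deleteEdges {s(x, u)}).Adj x u' := by simp [hu', hne, hu'.ne']
  exact isBridge_iff.1 hb (hxu'.reachable.trans (h.mono hle))

theorem exists_not_reachable_deleteIncidenceSet (hcut : ¬ (G.induce ({x}ᶜ : Set V)).Connected)
    {a : V} (ha : a ≠ x) :
    ∃ b c, b ≠ x ∧ c ≠ x ∧ ¬ (G.deleteIncidenceSet x).Reachable b c := by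
  by_contra! h
  have hsupp : ((G.deleteIncidenceSet x).connectedComponentMk a).supp = {x}ᶜ := by
    ext y
    simp only [ConnectedComponent.mem_supp_iff, ConnectedComponent.eq, Set.mem_compl_iff,
      Set.mem_singleton_iff]
    refine ⟨fun hy hyx => ha (eq_of_reachable_deleteIncidenceSet (hyx ▸ hy)), fun hy => h y a hy ha⟩
  apply hcut
  rw [← induce_deleteIncidenceSet_of_notMem G (by simp : x ∉ ({x}ᶜ : Set V)), ← hsupp]
  exact (ConnectedComponent.maximal_connected_induce_supp _).1

theorem Dominating.reachable_deleteIncidenceSet {d d' y : V} (hD : Dominating G {d, d'})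
    (hd : d ≠ x) (hd' : d' ≠ x) (hy : y ≠ x) :
    (G.deleteIncidenceSet x).Reachable y d ∨ (G.deleteIncidenceSet x).Reachable y d' := by
  by_cases h : y = d ∨ y = d'
  · rcases h with rfl | rfl
    exacts [.inl .rfl, .inr .rfl]
  rw [not_or] at h
  rcases dominating_pair_iff.1 hD y h.1 h.2 with hdy | hdy
  · exact .inl (deleteIncidenceSet_adj.2 ⟨hdy, hd, hy⟩).reachable.symm
  · exact .inr (deleteIncidenceSet_adj.2 ⟨hdy, hd', hy⟩).reachable.symm

end DeleteIncidenceSet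

theorem reachable_or_reachable_of_not_reachable {H : SimpleGraph V} {d d' v₁ v₂ y : V}
    (h₁₂ : ¬ H.Reachable v₁ v₂) (h₁ : H.Reachable v₁ d ∨ H.Reachable v₁ d')
    (h₂ : H.Reachable v₂ d ∨ H.Reachable v₂ d') (hy : H.Reachable y d ∨ H.Reachable y d') :
    H.Reachable y v₁ ∨ H.Reachable y v₂ := by
  rcases h₁ with h₁ | h₁ <;> rcases h₂ with h₂ | h₂ <;> rcases hy with hy | hy <;>
    first
    | exact absurd (h₁.trans h₂.symm) h₁₂
    | exact .inl (hy.trans h₁.symm)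
    | exact .inr (hy.trans h₂.symm)

structure IsSplit (G : SimpleGraph V) (x v₁ v₂ : V) (C₁ C₂ : Set V) : Prop where
  adj_iff : ∀ u, G.Adj x u ↔ u = v₁ ∨ u = v₂
  mem_or_mem_iff : ∀ y, y ∈ C₁ ∨ y ∈ C₂ ↔ y ≠ x
  disjoint : Disjoint C₁ C₂
  left_mem : v₁ ∈ C₁
  right_mem : v₂ ∈ C₂
  not_adj : ∀ u ∈ C₁, ∀ w ∈ C₂, ¬ G.Adj u w

theorem exists_isSplit {x : V} (hconn : G.Connected)
    (hcut : ¬ (G.induce ({x}ᶜ : Set V)).Connected)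
    (hbridge : ∀ y : V, G.Adj x y → G.IsBridge s(x, y)) (hW : WinsWithin2 G) :
    ∃ v₁ v₂ C₁ C₂, IsSplit G x v₁ v₂ C₁ C₂ := by
  set H := G.deleteIncidenceSet x
  obtain ⟨d₀, hd₀, -⟩ := hW x
  obtain ⟨a, b, hax, hbx, hab⟩ := exists_not_reachable_deleteIncidenceSet hcut hd₀
  obtain ⟨v₁, hv₁, ha⟩ := exists_adj_reachable_deleteIncidenceSet (hconn.preconnected a x).some hax
  obtain ⟨v₂, hv₂, hb⟩ := exists_adj_reachable_deleteIncidenceSet (hconn.preconnected b x).some hbx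
  have h₁₂ : ¬ H.Reachable v₁ v₂ := fun h => hab (ha.trans (h.trans hb.symm))
  obtain ⟨d, d', hd, hd', hD⟩ :=
    hW.exists_dominating_pair_ne (by rintro rfl; exact hab .rfl) hax hbx
  have hcover : ∀ y, y ≠ x → H.Reachable y v₁ ∨ H.Reachable y v₂ := fun y hy =>
    reachable_or_reachable_of_not_reachable h₁₂ (hD.reachable_deleteIncidenceSet hd hd' hv₁.ne')
      (hD.reachable_deleteIncidenceSet hd hd' hv₂.ne') (hD.reachable_deleteIncidenceSet hd hd' hy)
  refine ⟨v₁, v₂, {y | H.Reachable y v₁}, {y | H.Reachable y v₂}, ⟨fun u => ⟨fun hu => ?_, ?_⟩,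
    fun y => ⟨?_, hcover y⟩, Set.disjoint_left.2 fun y h₁ h₂ => h₁₂ (h₁.symm.trans h₂), .rfl, .rfl,
    fun u hu w hw huw => h₁₂ ?_⟩⟩
  · by_contra! hne
    rcases hcover u hu.ne' with h | h
    · exact not_reachable_deleteIncidenceSet_of_isBridge (hbridge v₁ hv₁) hu hne.1 h
    · exact not_reachable_deleteIncidenceSet_of_isBridge (hbridge v₂ hv₂) hu hne.2 h
  · rintro (rfl | rfl) <;> assumption
  · rintro (h | h) rfl
    exacts [hv₁.ne (eq_of_reachable_deleteIncidenceSet h).symm,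
      hv₂.ne (eq_of_reachable_deleteIncidenceSet h).symm]
  · have hux : u ≠ x := fun h => hv₁.ne (eq_of_reachable_deleteIncidenceSet (h ▸ hu)).symm
    have hwx : w ≠ x := fun h => hv₂.ne (eq_of_reachable_deleteIncidenceSet (h ▸ hw)).symm
    exact (show H.Reachable u v₁ from hu).symm.trans
      ((deleteIncidenceSet_adj.2 ⟨huw, hux, hwx⟩).reachable.trans hw)

def IsUniversalIn (G : SimpleGraph V) (C : Set V) (a : V) : Prop :=
  a ∈ C ∧ ∀ w ∈ C, w ≠ a → G.Adj a w

theorem IsUniversalIn.deleteEdges {C : Set V} {a w w' : V} (h : IsUniversalIn G C a)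
    (hw : a ≠ w) (hw' : a ≠ w') : IsUniversalIn (G.deleteEdges {s(w, w')}) C a :=
  ⟨h.1, fun y hy hya => by simp [h.2 y hy hya, hw, hw']⟩

structure IsCore (G : SimpleGraph V) (C : Set V) (v p q : V) : Prop where
  p_ne_q : p ≠ q
  p_ne_v : p ≠ v
  q_ne_v : q ≠ v
  isUniversalIn : ∀ c ∈ ({v, p, q} : Set V), IsUniversalIn G C c

theorem IsCore.adj_iff {C : Set V} {v p q u w : V} (hK : IsCore G C v p q)
    (hI : G.IsIndepSet (C \ {v, p, q})) (hu : u ∈ C) (hw : w ∈ C) :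
    G.Adj u w ↔ u ≠ w ∧ (u ∈ ({v, p, q} : Set V) ∨ w ∈ ({v, p, q} : Set V)) := by
  refine ⟨fun h => ⟨h.ne, ?_⟩, ?_⟩
  · by_contra! hn
    exact hI ⟨hu, hn.1⟩ ⟨hw, hn.2⟩ h.ne h
  · rintro ⟨hne, hu' | hw'⟩
    · exact (hK.isUniversalIn u hu').2 w hw hne.symm
    · exact ((hK.isUniversalIn w hw').2 u hu hne).symm

namespace IsSplit

variable {x v₁ v₂ : V} {C₁ C₂ : Set V}

theorem symm (hS : IsSplit G x v₁ v₂ C₁ C₂) : IsSplit G x v₂ v₁ C₂ C₁ where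
  adj_iff u := (hS.adj_iff u).trans or_comm
  mem_or_mem_iff y := or_comm.trans (hS.mem_or_mem_iff y)
  disjoint := hS.disjoint.symm
  left_mem := hS.right_mem
  right_mem := hS.left_mem
  not_adj u hu w hw h := hS.not_adj w hw u hu h.symm

theorem of_le {G' : SimpleGraph V} (hS : IsSplit G x v₁ v₂ C₁ C₂) (hle : G' ≤ G)
    (hx : ∀ u, G.Adj x u → G'.Adj x u) : IsSplit G' x v₁ v₂ C₁ C₂ where
  adj_iff u := ⟨fun h => (hS.adj_iff u).1 (hle h), fun h => hx u ((hS.adj_iff u).2 h)⟩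
  mem_or_mem_iff := hS.mem_or_mem_iff
  disjoint := hS.disjoint
  left_mem := hS.left_mem
  right_mem := hS.right_mem
  not_adj u hu w hw h := hS.not_adj u hu w hw (hle h)

theorem ne_of_mem_left (hS : IsSplit G x v₁ v₂ C₁ C₂) {y : V} (hy : y ∈ C₁) : y ≠ x :=
  (hS.mem_or_mem_iff y).1 (.inl hy)

theorem adj_left (hS : IsSplit G x v₁ v₂ C₁ C₂) : G.Adj x v₁ :=
  (hS.adj_iff v₁).2 (.inl rfl)

theorem left_ne_right (hS : IsSplit G x v₁ v₂ C₁ C₂) : v₁ ≠ v₂ :=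
  hS.disjoint.ne_of_mem hS.left_mem hS.right_mem

theorem mem_left_of_adj (hS : IsSplit G x v₁ v₂ C₁ C₂) {u w : V} (hu : u ∈ C₁) (huv : u ≠ v₁)
    (h : G.Adj u w) : w ∈ C₁ := by
  have hwx : w ≠ x := by
    rintro rfl
    rcases (hS.adj_iff u).1 h.symm with rfl | rfl
    exacts [huv rfl, hS.disjoint.ne_of_mem hu hS.right_mem rfl]
  exact ((hS.mem_or_mem_iff w).2 hwx).resolve_right fun hw => hS.not_adj u hu w hw h

theorem not_dominating_singleton (hS : IsSplit G x v₁ v₂ C₁ C₂) {d : V} (hd : d ≠ x) :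
    ¬ Dominating G {d} := by
  rw [dominating_singleton_iff]
  intro hD
  rcases (hS.mem_or_mem_iff d).2 hd with h | h
  · exact hS.not_adj d h v₂ hS.right_mem (hD v₂ (hS.disjoint.ne_of_mem h hS.right_mem).symm)
  · exact hS.not_adj v₁ hS.left_mem d h (hD v₁ (hS.disjoint.ne_of_mem hS.left_mem h)).symm

theorem isUniversalIn_of_dominating (hS : IsSplit G x v₁ v₂ C₁ C₂) {a b : V}
    (hD : Dominating G {a, b}) (ha : a ∈ C₁) (hb : b ∈ C₂) : IsUniversalIn G C₁ a := by
  refine ⟨ha, fun w hw hwa => ?_⟩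
  refine (dominating_pair_iff.1 hD w hwa (hS.disjoint.ne_of_mem hw hb)).resolve_right ?_
  exact fun h => hS.not_adj w hw b hb h.symm

theorem dominating_of_isUniversalIn (hS : IsSplit G x v₁ v₂ C₁ C₂) {a b : V}
    (ha : IsUniversalIn G C₁ a) (hb : IsUniversalIn G C₂ b) (hv : a = v₁ ∨ b = v₂) :
    Dominating G {a, b} := by
  rw [dominating_pair_iff]
  intro y hya hyb
  by_cases hyx : y = x
  · subst hyx
    rcases hv with rfl | rfl
    exacts [.inl hS.adj_left.symm, .inr hS.symm.adj_left.symm]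
  rcases (hS.mem_or_mem_iff y).2 hyx with hy | hy
  exacts [.inl (ha.2 y hy hya), .inr (hb.2 y hy hyb)]

theorem mem_left_of_dominating (hS : IsSplit G x v₁ v₂ C₁ C₂) (h₁ : C₁.Nontrivial) {d d' : V}
    (hD : Dominating G {d, d'}) : d ∈ C₁ ∨ d' ∈ C₁ := by
  obtain ⟨y, hy, hyv⟩ := h₁.exists_ne v₁
  by_cases h : y = d ∨ y = d'
  · rcases h with rfl | rfl
    exacts [.inl hy, .inr hy]
  rw [not_or] at h
  rcases dominating_pair_iff.1 hD y h.1 h.2 with h | h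
  exacts [.inl (hS.mem_left_of_adj hy hyv h.symm), .inr (hS.mem_left_of_adj hy hyv h.symm)]

theorem mem_of_dominating (hS : IsSplit G x v₁ v₂ C₁ C₂) (h₁ : C₁.Nontrivial)
    (h₂ : C₂.Nontrivial) {d d' : V} (hD : Dominating G {d, d'}) :
    d ∈ C₁ ∧ d' ∈ C₂ ∨ d ∈ C₂ ∧ d' ∈ C₁ := by
  have hdisj := hS.disjoint.ne_of_mem
  rcases hS.mem_left_of_dominating h₁ hD with h | h <;>
    rcases hS.symm.mem_left_of_dominating h₂ hD with h' | h'
  exacts [absurd rfl (hdisj h h'), .inl ⟨h, h'⟩, .inr ⟨h', h⟩, absurd rfl (hdisj h h')]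

/-- Against Staller's opening move `v₁`, Dominator must answer `v₂`; Staller's next moves
then force out two universal vertices of `C₁` besides `v₁`. -/
theorem exists_universal_pair (hS : IsSplit G x v₁ v₂ C₁ C₂) (hW : WinsWithin2 G)
    (h₁ : C₁.Nontrivial) (h₂ : C₂.Nontrivial) :
    IsUniversalIn G C₂ v₂ ∧ ∃ p q, p ≠ q ∧ p ≠ v₁ ∧ q ≠ v₁ ∧
      IsUniversalIn G C₁ p ∧ IsUniversalIn G C₁ q := by
  have hdisj := hS.disjoint.ne_of_mem
  have hsingle : ∀ d, d ≠ v₁ → ¬ Dominating G {d} := fun d _ hD => by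
    rw [← Set.pair_eq_singleton] at hD
    rcases hS.mem_of_dominating h₁ h₂ hD with ⟨h, h'⟩ | ⟨h', h⟩ <;> exact hdisj h h' rfl
  have partner : ∀ p, Dominating G {v₂, p} → IsUniversalIn G C₂ v₂ ∧ IsUniversalIn G C₁ p := by
    intro p hD
    rcases hS.mem_of_dominating h₁ h₂ hD with ⟨h, -⟩ | ⟨-, hp⟩
    · exact absurd rfl (hdisj h hS.right_mem)
    refine ⟨hS.symm.isUniversalIn_of_dominating hD hS.right_mem hp, ?_⟩
    rw [Set.pair_comm] at hD
    exact hS.isUniversalIn_of_dominating hD hp hS.right_mem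
  obtain ⟨d, hdv₁, hresp⟩ := hW.exists_response v₁ hsingle
  have hd : d = v₂ := by
    by_contra hdv₂
    obtain ⟨e, hev₁, -, hev₂, hD⟩ := hresp v₂ hS.left_ne_right.symm (Ne.symm hdv₂)
    have hx : d ≠ x ∧ e ≠ x := by
      rcases hS.mem_of_dominating h₁ h₂ hD with ⟨h, h'⟩ | ⟨h, h'⟩
      · exact ⟨hS.ne_of_mem_left h, hS.symm.ne_of_mem_left h'⟩
      · exact ⟨hS.symm.ne_of_mem_left h, hS.ne_of_mem_left h'⟩
    rcases dominating_pair_iff.1 hD x hx.1.symm hx.2.symm with h | h <;>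
      rcases (hS.adj_iff _).1 h.symm with h | h <;> contradiction
  rw [hd] at hresp
  obtain ⟨y, hy, hyv⟩ := h₁.exists_ne v₁
  obtain ⟨p, hpv₁, -, -, hDp⟩ := hresp y hyv (hdisj hy hS.right_mem)
  obtain ⟨hv₂, hp⟩ := partner p hDp
  obtain ⟨q, hqv₁, -, hqp, hDq⟩ := hresp p hpv₁ (hdisj hp.1 hS.right_mem)
  exact ⟨hv₂, p, q, hqp.symm, hpv₁, hqv₁, hp, (partner q hDq).2⟩

theorem exists_isCore (hS : IsSplit G x v₁ v₂ C₁ C₂) (hW : WinsWithin2 G) (h₁ : C₁.Nontrivial)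
    (h₂ : C₂.Nontrivial) : ∃ p q, IsCore G C₁ v₁ p q := by
  obtain ⟨-, p, q, hpq, hpv, hqv, hp, hq⟩ := hS.exists_universal_pair hW h₁ h₂
  have hv := (hS.symm.exists_universal_pair hW h₂ h₁).1
  exact ⟨p, q, hpq, hpv, hqv, by rintro c (rfl | rfl | rfl) <;> assumption⟩

/-- When `C₂ = {v₂}`, deleting the edge `x v₁` leaves the edge `x v₂` as a separate component. -/
theorem dominating_deleteEdges_of_subsingleton (hS : IsSplit G x v₁ v₂ C₁ C₂)
    (hC₂ : C₂.Subsingleton) {a b : V} (ha : a = x ∨ a = v₂) (hb : IsUniversalIn G C₁ b) :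
    Dominating (G.deleteEdges {s(x, v₁)}) {a, b} := by
  have hv₂x : v₂ ≠ x := hS.symm.ne_of_mem_left hS.right_mem
  have hbx : b ≠ x := hS.ne_of_mem_left hb.1
  rw [dominating_pair_iff]
  intro y hya hyb
  by_cases hy : y = x ∨ y = v₂
  · left
    have hxv₂ : G.Adj x v₂ := hS.symm.adj_left
    have hv₂v₁ : v₂ ≠ v₁ := hS.left_ne_right.symm
    rcases ha with rfl | rfl <;> rcases hy with rfl | rfl
    · exact absurd rfl hya
    · simp [hxv₂, hv₂x, hv₂v₁]
    · simp [hxv₂.symm, hv₂x, hv₂v₁]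
    · exact absurd rfl hya
  · right
    rw [not_or] at hy
    have hyC : y ∈ C₁ := ((hS.mem_or_mem_iff y).2 hy.1).resolve_right
      fun h => hy.2 (hC₂ h hS.right_mem)
    simp [hb.2 y hyC hyb, hbx, hy.1]

theorem nontrivial_right (hS : IsSplit G x v₁ v₂ C₁ C₂) (hW : WinsWithin2 G)
    (hdel : ∀ u v : V, G.Adj u v → ¬ WinsWithin2 (G.deleteEdges {s(u, v)})) :
    C₂.Nontrivial := by
  by_contra hC₂
  rw [Set.not_nontrivial_iff] at hC₂
  have hv₂x : v₂ ≠ x := hS.symm.ne_of_mem_left hS.right_mem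
  have hv₂ : ∀ w, G.Adj w v₂ → w = x := fun w h => by
    by_contra hwx
    rcases (hS.mem_or_mem_iff w).2 hwx with hw | hw
    · exact hS.not_adj w hw v₂ hS.right_mem h
    · exact h.ne (hC₂ hw hS.right_mem)
  obtain ⟨d, hdx, hresp⟩ := hW.exists_response x fun d hd => hS.not_dominating_singleton hd
  have hd : d = v₂ := by
    by_contra hdv
    obtain ⟨e, hex, -, hev, hD⟩ := hresp v₂ hv₂x (Ne.symm hdv)
    rcases dominating_pair_iff.1 hD v₂ (Ne.symm hdv) (Ne.symm hev) with h | h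
    exacts [hdx (hv₂ d h), hex (hv₂ e h)]
  rw [hd] at hresp
  have partner : ∀ p, p ≠ x → p ≠ v₂ → Dominating G {v₂, p} → IsUniversalIn G C₁ p := by
    intro p hpx hpv hD
    have hp : p ∈ C₁ := ((hS.mem_or_mem_iff p).2 hpx).resolve_right
      fun h => hpv (hC₂ h hS.right_mem)
    rw [Set.pair_comm] at hD
    exact hS.isUniversalIn_of_dominating hD hp hS.right_mem
  obtain ⟨p, hpx, hpv₂, -, hDp⟩ := hresp v₁ (hS.ne_of_mem_left hS.left_mem) hS.left_ne_right
  obtain ⟨q, hqx, hqv₂, hqp, hDq⟩ := hresp p hpx hpv₂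
  apply hdel x v₁ hS.adj_left
  refine winsWithin2_of_dominating_pairs (A := {x, v₂}) (B := {p, q}) ?_
    (Set.nontrivial_pair hv₂x.symm) (Set.nontrivial_pair hqp.symm) fun a ha b hb =>
    hS.dominating_deleteEdges_of_subsingleton hC₂ ha ?_
  · simpa using ⟨⟨hpx, hpv₂⟩, hqx, hqv₂⟩
  · rcases hb with rfl | rfl
    exacts [partner b hpx hpv₂ hDp, partner b hqx hqv₂ hDq]

/-- Deleting an edge between two vertices of `C₁ \ {v₁, p₁, q₁}` keeps Dominator's strategy:
answer `v₁`, or `v₂` if Staller took `v₁`, and complete with a universal vertex of the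
other side. -/
theorem isIndepSet_of_critical (hS : IsSplit G x v₁ v₂ C₁ C₂)
    (hdel : ∀ u v : V, G.Adj u v → ¬ WinsWithin2 (G.deleteEdges {s(u, v)}))
    {p₁ q₁ p₂ q₂ : V} (hK₁ : IsCore G C₁ v₁ p₁ q₁) (hK₂ : IsCore G C₂ v₂ p₂ q₂) :
    G.IsIndepSet (C₁ \ {v₁, p₁, q₁}) := by
  intro w hw w' hw' _ h
  apply hdel w w' h
  have hS' := hS.of_le (G' := G.deleteEdges {s(w, w')}) (deleteEdges_le _) fun u hu => by
    simp [hu, (hS.ne_of_mem_left hw.1).symm, (hS.ne_of_mem_left hw'.1).symm]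
  have hU₁ : ∀ c ∈ ({v₁, p₁, q₁} : Set V),
      IsUniversalIn (G.deleteEdges {s(w, w')}) C₁ c := fun c hc =>
    (hK₁.isUniversalIn c hc).deleteEdges (fun h => hw.2 (h ▸ hc)) (fun h => hw'.2 (h ▸ hc))
  have hU₂ : ∀ c ∈ ({v₂, p₂, q₂} : Set V),
      IsUniversalIn (G.deleteEdges {s(w, w')}) C₂ c := fun c hc =>
    have hcC := (hK₂.isUniversalIn c hc).1
    (hK₂.isUniversalIn c hc).deleteEdges (hS.disjoint.ne_of_mem hw.1 hcC).symm
      (hS.disjoint.ne_of_mem hw'.1 hcC).symm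
  refine winsWithin2_of_nontrivial_partners fun s₁ => ?_
  by_cases hs : s₁ = v₁
  · subst s₁
    refine ⟨v₂, hS.left_ne_right.symm, (Set.nontrivial_pair hK₁.p_ne_q).mono ?_⟩
    intro c hc
    have hc' : c ∈ ({v₁, p₁, q₁} : Set V) := by rcases hc with rfl | rfl <;> simp
    have hcC := (hU₁ c hc').1
    refine ⟨?_, hS.disjoint.ne_of_mem hcC hS.right_mem, ?_⟩
    · rcases hc with rfl | rfl
      exacts [hK₁.p_ne_v, hK₁.q_ne_v]
    rw [Set.pair_comm]
    exact hS'.dominating_of_isUniversalIn (hU₁ c hc') (hU₂ v₂ (by simp)) (.inr rfl)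
  · refine ⟨v₁, Ne.symm hs, (nontrivial_triple_diff_singleton hK₂.p_ne_v.symm hK₂.q_ne_v.symm
      hK₂.p_ne_q s₁).mono fun c hc => ⟨hc.2, ?_, ?_⟩⟩
    · exact (hS.disjoint.ne_of_mem hS.left_mem (hU₂ c hc.1).1).symm
    · exact hS'.dominating_of_isUniversalIn (hU₁ v₁ (by simp)) (hU₂ c hc.1) (.inl rfl)

end IsSplit

theorem nonempty_iso_of_card_fiber_eq {W R : Type*} [Finite V] [Finite W] {H : SimpleGraph W}
    (r : R → R → Prop) (f : V → R) (g : W → R) (hG : ∀ u v, G.Adj u v ↔ u ≠ v ∧ r (f u) (f v))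
    (hH : ∀ u v, H.Adj u v ↔ u ≠ v ∧ r (g u) (g v))
    (hcard : ∀ c, Nat.card {v // f v = c} = Nat.card {w // g w = c}) : Nonempty (G ≃g H) := by
  let φ := Equiv.ofFiberEquiv fun c => (Finite.card_eq.1 (hcard c)).some
  have hφ : ∀ a, g (φ a) = f a := Equiv.ofFiberEquiv_map _
  refine ⟨⟨φ, fun {u v} => ?_⟩⟩
  rw [hH, hG, hφ, hφ, φ.injective.ne_iff]

theorem card_fin_val_le_one {m : ℕ} (hm : 2 ≤ m) : Fintype.card {a : Fin m // a.val ≤ 1} = 2 := by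
  simp_rw [Fintype.card_subtype, Nat.le_iff_lt_add_one, Fin.card_filter_val_lt]
  omega

theorem card_fin_one_lt_val (m : ℕ) : Fintype.card {a : Fin m // 1 < a.val} = m - 2 := by
  simp_rw [← not_le, Fintype.card_subtype_compl, Fintype.card_fin, Fintype.card_subtype,
    Nat.le_iff_lt_add_one, Fin.card_filter_val_lt]
  omega

/-- Vertices of `F_{m₁,1,m₂}` and of `G` get roles in `Option (Fin 2 × Level)`: `none` for the
middle vertex (`b`, resp. `x`), `some (k, l)` for a vertex on side `k` that is the neighbour
`v_k` of the middle vertex (`apex`), one of the two dominating vertices of `H_{m_k}` (`hub`), or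
one of its remaining vertices (`leaf`). Distinct vertices are adjacent iff their roles satisfy
`RoleAdj`. -/
inductive Level
  | apex
  | hub
  | leaf

def Level.count (m : ℕ) : Level → ℕ
  | .apex => 1
  | .hub => 2
  | .leaf => m - 2

def RoleAdj : Option (Fin 2 × Level) → Option (Fin 2 × Level) → Prop
  | none, none => False
  | none, some (_, l) => l = .apex
  | some (_, l), none => l = .apex
  | some (i, l), some (j, l') => i = j ∧ (l ≠ .leaf ∨ l' ≠ .leaf)

def roleCount (m₁ m₂ : ℕ) : Option (Fin 2 × Level) → ℕ
  | none => 1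
  | some (k, l) => l.count (![m₁, m₂] k)

namespace FGraph

variable {m₁ m₂ : ℕ}

def role : FVert m₁ 1 m₂ → Option (Fin 2 × Level)
  | .inl (.inl a) => some (0, if a.val ≤ 1 then .hub else .leaf)
  | .inl (.inr a) => some (1, if a.val ≤ 1 then .hub else .leaf)
  | .inr (.inl _) => none
  | .inr (.inr k) => some (k, .apex)

theorem adj_iff_roleAdj (u v : FVert m₁ 1 m₂) :
    (FGraph m₁ 1 m₂).Adj u v ↔ u ≠ v ∧ RoleAdj (role u) (role v) := by
  rcases u with (a | a) | (b | k) <;> rcases v with (a' | a') | (b' | k') <;>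
    simp only [FGraph, fromRel_adj, role, RoleAdj] <;>
    (try split_ifs) <;> simp <;> omega

theorem card_role_fiber (h₁ : 2 ≤ m₁) (h₂ : 2 ≤ m₂) (c : Option (Fin 2 × Level)) :
    Nat.card {u : FVert m₁ 1 m₂ // role u = c} = roleCount m₁ m₂ c := by
  simp only [Nat.card_congr Equiv.subtypeSum, Nat.card_sum]
  rcases c with _ | ⟨k, l⟩
  · simp [role, roleCount]
  · fin_cases k <;> cases l <;>
      simp [role, roleCount, Level.count, ite_eq_iff, card_fin_val_le_one, card_fin_one_lt_val,
        h₁, h₂]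

end FGraph

section CoreLevel

variable {v p q y : V}

open Classical in
noncomputable def coreLevel (v p q y : V) : Level :=
  if y = v then .apex else if y = p ∨ y = q then .hub else .leaf

theorem coreLevel_eq_apex_iff : coreLevel v p q y = .apex ↔ y = v := by
  unfold coreLevel
  split_ifs <;> simp_all

theorem coreLevel_ne_leaf_iff : coreLevel v p q y ≠ .leaf ↔ y ∈ ({v, p, q} : Set V) := by
  unfold coreLevel
  split_ifs <;> simp_all

theorem coreLevel_eq_hub_iff (hpv : p ≠ v) (hqv : q ≠ v) :
    coreLevel v p q y = .hub ↔ y ∈ ({p, q} : Set V) := by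
  have := hpv.symm
  have := hqv.symm
  unfold coreLevel
  split_ifs <;> simp_all

theorem IsCore.card_coreLevel {C : Set V} (hK : IsCore G C v p q) (l : Level) :
    Nat.card {y // y ∈ C ∧ coreLevel v p q y = l} = l.count (Nat.card ↥(C \ {v, p, q}) + 2) := by
  have hmem : ∀ c ∈ ({v, p, q} : Set V), c ∈ C := fun c hc => (hK.isUniversalIn c hc).1
  cases l
  · rw [Nat.card_congr (Equiv.subtypeEquivRight fun y => show _ ↔ y = v by
      rw [coreLevel_eq_apex_iff]
      exact ⟨And.right, fun h => ⟨hmem y (by simp [h]), h⟩⟩)]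
    simp [Level.count]
  · rw [Nat.card_congr (Equiv.subtypeEquivRight fun y => show _ ↔ y ∈ ({p, q} : Set V) by
      rw [coreLevel_eq_hub_iff hK.p_ne_v hK.q_ne_v]
      exact ⟨And.right, fun h => ⟨hmem y (by rcases h with rfl | rfl <;> simp), h⟩⟩)]
    rw [Nat.card_coe_set_eq, Set.ncard_pair hK.p_ne_q, Level.count]
  · rw [Nat.card_congr (Equiv.subtypeEquivRight fun y => show _ ↔ y ∈ C \ {v, p, q} by
      rw [Set.mem_sdiff, ← coreLevel_ne_leaf_iff, not_not])]
    rw [Level.count, Nat.add_sub_cancel]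

end CoreLevel

open Classical in
noncomputable def splitRole (x : V) (C₁ : Set V) (v₁ p₁ q₁ v₂ p₂ q₂ y : V) :
    Option (Fin 2 × Level) :=
  if y = x then none
  else if y ∈ C₁ then some (0, coreLevel v₁ p₁ q₁ y) else some (1, coreLevel v₂ p₂ q₂ y)

namespace IsSplit

variable {x v₁ v₂ p₁ q₁ p₂ q₂ : V} {C₁ C₂ : Set V}

theorem splitRole_eq_some_left_iff (hS : IsSplit G x v₁ v₂ C₁ C₂) (y : V) (l : Level) :
    splitRole x C₁ v₁ p₁ q₁ v₂ p₂ q₂ y = some (0, l) ↔ y ∈ C₁ ∧ coreLevel v₁ p₁ q₁ y = l := by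
  unfold splitRole
  have hx₁ : x ∉ C₁ := fun h => hS.ne_of_mem_left h rfl
  split_ifs with hx hy
  · simp [hx, hx₁]
  · simp [hy]
  · simp [hy]

theorem splitRole_eq_some_right_iff (hS : IsSplit G x v₁ v₂ C₁ C₂) (y : V) (l : Level) :
    splitRole x C₁ v₁ p₁ q₁ v₂ p₂ q₂ y = some (1, l) ↔ y ∈ C₂ ∧ coreLevel v₂ p₂ q₂ y = l := by
  unfold splitRole
  have hx₂ : x ∉ C₂ := fun h => hS.symm.ne_of_mem_left h rfl
  split_ifs with hx hy
  · simp [hx, hx₂]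
  · have hy₂ : y ∉ C₂ := fun h => hS.disjoint.ne_of_mem hy h rfl
    simp [hy₂]
  · simp [((hS.mem_or_mem_iff y).2 hx).resolve_left hy]

theorem adj_iff_roleAdj (hS : IsSplit G x v₁ v₂ C₁ C₂) (hK₁ : IsCore G C₁ v₁ p₁ q₁)
    (hK₂ : IsCore G C₂ v₂ p₂ q₂) (hI₁ : G.IsIndepSet (C₁ \ {v₁, p₁, q₁}))
    (hI₂ : G.IsIndepSet (C₂ \ {v₂, p₂, q₂})) (u w : V) :
    G.Adj u w ↔ u ≠ w ∧ RoleAdj (splitRole x C₁ v₁ p₁ q₁ v₂ p₂ q₂ u)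
      (splitRole x C₁ v₁ p₁ q₁ v₂ p₂ q₂ w) := by
  set f := splitRole x C₁ v₁ p₁ q₁ v₂ p₂ q₂
  have hfx : f x = none := by simp [f, splitRole]
  have hf₁ : ∀ y ∈ C₁, f y = some (0, coreLevel v₁ p₁ q₁ y) := fun y hy =>
    (hS.splitRole_eq_some_left_iff y _).2 ⟨hy, rfl⟩
  have hf₂ : ∀ y ∈ C₂, f y = some (1, coreLevel v₂ p₂ q₂ y) := fun y hy =>
    (hS.splitRole_eq_some_right_iff y _).2 ⟨hy, rfl⟩
  have hx₁ : ∀ y ∈ C₁, G.Adj x y ↔ y = v₁ := fun y hy =>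
    (hS.adj_iff y).trans (or_iff_left (hS.disjoint.ne_of_mem hy hS.right_mem))
  have hx₂ : ∀ y ∈ C₂, G.Adj x y ↔ y = v₂ := fun y hy =>
    (hS.symm.adj_iff y).trans (or_iff_left (hS.disjoint.ne_of_mem hS.left_mem hy).symm)
  have hside : ∀ y, y = x ∨ y ∈ C₁ ∨ y ∈ C₂ := fun y =>
    (eq_or_ne y x).imp_right (hS.mem_or_mem_iff y).2
  rcases hside u with rfl | hu | hu <;> rcases hside w with rfl | hw | hw
  · simp
  · rw [hfx, hf₁ w hw, hx₁ w hw]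
    simp [RoleAdj, coreLevel_eq_apex_iff, (hS.ne_of_mem_left hw).symm]
  · rw [hfx, hf₂ w hw, hx₂ w hw]
    simp [RoleAdj, coreLevel_eq_apex_iff, (hS.symm.ne_of_mem_left hw).symm]
  · rw [G.adj_comm, hfx, hf₁ u hu, hx₁ u hu]
    simp [RoleAdj, coreLevel_eq_apex_iff, hS.ne_of_mem_left hu]
  · rw [hf₁ u hu, hf₁ w hw, hK₁.adj_iff hI₁ hu hw]
    simp [RoleAdj, coreLevel_ne_leaf_iff]
  · rw [hf₁ u hu, hf₂ w hw]
    exact iff_of_false (hS.not_adj u hu w hw) (by simp [RoleAdj])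
  · rw [G.adj_comm, hfx, hf₂ u hu, hx₂ u hu]
    simp [RoleAdj, coreLevel_eq_apex_iff, hS.symm.ne_of_mem_left hu]
  · rw [hf₂ u hu, hf₁ w hw]
    exact iff_of_false (fun h => hS.not_adj w hw u hu h.symm) (by simp [RoleAdj])
  · rw [hf₂ u hu, hf₂ w hw, hK₂.adj_iff hI₂ hu hw]
    simp [RoleAdj, coreLevel_ne_leaf_iff]

theorem card_splitRole_fiber (hS : IsSplit G x v₁ v₂ C₁ C₂) (hK₁ : IsCore G C₁ v₁ p₁ q₁)
    (hK₂ : IsCore G C₂ v₂ p₂ q₂) (c : Option (Fin 2 × Level)) :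
    Nat.card {y // splitRole x C₁ v₁ p₁ q₁ v₂ p₂ q₂ y = c} =
      roleCount (Nat.card ↥(C₁ \ {v₁, p₁, q₁}) + 2) (Nat.card ↥(C₂ \ {v₂, p₂, q₂}) + 2) c := by
  rcases c with _ | ⟨k, l⟩
  · rw [Nat.card_congr (Equiv.subtypeEquivRight fun y => show _ ↔ y = x by
      unfold splitRole; split_ifs <;> simp_all)]
    simp [roleCount]
  · match k with
    | 0 =>
      rw [Nat.card_congr (Equiv.subtypeEquivRight (hS.splitRole_eq_some_left_iff · l))]
      exact hK₁.card_coreLevel l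
    | 1 =>
      rw [Nat.card_congr (Equiv.subtypeEquivRight (hS.splitRole_eq_some_right_iff · l))]
      exact hK₂.card_coreLevel l

theorem nonempty_iso_fGraph [Finite V] (hS : IsSplit G x v₁ v₂ C₁ C₂)
    (hK₁ : IsCore G C₁ v₁ p₁ q₁) (hK₂ : IsCore G C₂ v₂ p₂ q₂)
    (hI₁ : G.IsIndepSet (C₁ \ {v₁, p₁, q₁})) (hI₂ : G.IsIndepSet (C₂ \ {v₂, p₂, q₂})) :
    Nonempty (G ≃g FGraph (Nat.card ↥(C₁ \ {v₁, p₁, q₁}) + 2) 1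
      (Nat.card ↥(C₂ \ {v₂, p₂, q₂}) + 2)) :=
  nonempty_iso_of_card_fiber_eq RoleAdj _ FGraph.role (hS.adj_iff_roleAdj hK₁ hK₂ hI₁ hI₂)
    FGraph.adj_iff_roleAdj fun c => (hS.card_splitRole_fiber hK₁ hK₂ c).trans
      (FGraph.card_role_fiber (by omega) (by omega) c).symm

end IsSplit

end

theorem stmt7 {V : Type*} [Fintype V] (G : SimpleGraph V) (hconn : G.Connected)
    (hcrit : Critical2 G) (x : V)
    (hcut : ¬ (G.induce ({x}ᶜ : Set V)).Connected)
    (hbridge : ∀ y : V, G.Adj x y → G.IsBridge s(x, y)) :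
    ∃ m₁ m₂ : ℕ, 2 ≤ m₁ ∧ m₁ ≤ m₂ ∧ Nonempty (G ≃g FGraph m₁ 1 m₂) := by
  obtain ⟨⟨hW, -⟩, hdel⟩ := hcrit
  obtain ⟨v₁, v₂, C₁, C₂, hS⟩ := exists_isSplit hconn hcut hbridge hW
  have h₁ : C₁.Nontrivial := hS.symm.nontrivial_right hW hdel
  have h₂ : C₂.Nontrivial := hS.nontrivial_right hW hdel
  obtain ⟨p₁, q₁, hK₁⟩ := hS.exists_isCore hW h₁ h₂
  obtain ⟨p₂, q₂, hK₂⟩ := hS.symm.exists_isCore hW h₂ h₁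
  have hI₁ := hS.isIndepSet_of_critical hdel hK₁ hK₂
  have hI₂ := hS.symm.isIndepSet_of_critical hdel hK₂ hK₁
  rcases le_total (Nat.card ↥(C₁ \ {v₁, p₁, q₁})) (Nat.card ↥(C₂ \ {v₂, p₂, q₂})) with h | h
  · exact ⟨_, _, by omega, by omega, hS.nonempty_iso_fGraph hK₁ hK₂ hI₁ hI₂⟩
  · exact ⟨_, _, by omega, by omega, hS.symm.nonempty_iso_fGraph hK₂ hK₁ hI₂ hI₁⟩
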